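/- Let β > 0, σ > 0, T > 0 and x₀ ∈ ℝ. For t > 0 and x ∈ ℝ let P₁(x,t) be the Gaussian density in x with mean x₀ and variance σ²t, and let P₂(x,t) be the Gaussian density in x with mean x₀e^{−βt} and variance (σ²/(2β))·(1 − e^{−2βt}). Then there exists a constant C > 0 (depending on β, σ, x₀ and T) such that for all x ∈ ℝ and all t ∈ (0, T], P₂(x,t) ≤ C·P₁(x,t). -/

import Mathlib

/-!
Both densities are Gaussian, with variances `v₂ = σ₂² < v₁ = σ²t` for `t > 0`. A quotient of
Gaussian densities with `v₂ < v₁` is at most `√(v₁/v₂) · exp ((m₁ - m₂)² / (2 (v₁ - v₂)))`, its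
value at the maximising `x`. Here `v₁ / v₂ ≤ e^{2βt}` because `y ≤ e^y - 1`, and with
`a = e^{-βt}` the means differ by `x₀ (1 - a)` while `v₁ - v₂ ≥ σ² (1 - a)² / (4β)`, by
`-log (1 - u) ≥ u + u²/2` at `u = 1 - a²`. So the quotient is at most `e^{βT} e^{2βx₀²/σ²}`.
-/

open Real ProbabilityTheory
open scoped NNReal

theorem add_sq_div_two_le_neg_log_one_sub {u : ℝ} (h0 : 0 ≤ u) (h1 : u < 1) :
    u + u ^ 2 / 2 ≤ -log (1 - u) := by
  have hs := hasSum_pow_div_log_of_abs_lt_one (by rwa [abs_of_nonneg h0])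
  have := sum_le_hasSum (Finset.range 2) (fun n _ => by positivity) hs
  norm_num [Finset.sum_range_succ] at this
  linarith

theorem sq_one_sub_exp_neg_div_two_le {y : ℝ} (hy : 0 ≤ y) :
    (1 - exp (-y)) ^ 2 / 2 ≤ y - (1 - exp (-y)) := by
  have h := add_sq_div_two_le_neg_log_one_sub (u := 1 - exp (-y))
    (by linarith [exp_le_one_iff.mpr (neg_nonpos.mpr hy)]) (by linarith [exp_pos (-y)])
  rw [sub_sub_cancel, log_exp, neg_neg] at h
  linarith

theorem sq_div_sub_sq_div_le_sq_div_sub {v₁ v₂ : ℝ} (hv₂ : 0 < v₂) (hv : v₂ < v₁)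
    (x m₁ m₂ : ℝ) :
    (x - m₁) ^ 2 / (2 * v₁) - (x - m₂) ^ 2 / (2 * v₂) ≤ (m₁ - m₂) ^ 2 / (2 * (v₁ - v₂)) := by
  have hv₁ : 0 < v₁ := hv₂.trans hv
  have hgap : 0 < v₁ - v₂ := sub_pos.mpr hv
  have key : (m₁ - m₂) ^ 2 / (2 * (v₁ - v₂))
      - ((x - m₁) ^ 2 / (2 * v₁) - (x - m₂) ^ 2 / (2 * v₂))
      = ((v₁ - v₂) * (x - m₁) + v₁ * (m₁ - m₂)) ^ 2 / (2 * v₁ * v₂ * (v₁ - v₂)) := by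
    field_simp
    ring
  have : 0 ≤ ((v₁ - v₂) * (x - m₁) + v₁ * (m₁ - m₂)) ^ 2 / (2 * v₁ * v₂ * (v₁ - v₂)) := by
    positivity
  linarith

theorem gaussianPDFReal_le_mul_gaussianPDFReal {m₁ m₂ c K : ℝ} {v₁ v₂ : ℝ≥0}
    (hv₂ : 0 < v₂) (hv : v₂ < v₁) (hc : 0 ≤ c) (hvc : (v₁ : ℝ) ≤ c ^ 2 * v₂)
    (hm : (m₁ - m₂) ^ 2 ≤ 2 * K * (v₁ - v₂)) (x : ℝ) :
    gaussianPDFReal m₂ v₂ x ≤ c * exp K * gaussianPDFReal m₁ v₁ x := by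
  have hv₂' : (0 : ℝ) < v₂ := hv₂
  have hv₁' : (0 : ℝ) < v₁ := hv₂.trans hv
  have hgap : (0 : ℝ) < v₁ - v₂ := sub_pos.mpr hv
  have hnorm : (√(2 * π * v₂))⁻¹ ≤ c * (√(2 * π * v₁))⁻¹ := by
    have hsqrt : √(2 * π * v₁) ≤ c * √(2 * π * v₂) := by
      rw [← sqrt_sq hc, ← sqrt_mul (sq_nonneg c)]
      exact sqrt_le_sqrt (by nlinarith [pi_pos])
    rw [← div_eq_mul_inv, le_div_iff₀ (by positivity), inv_mul_le_iff₀ (by positivity)]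
    linarith
  have hexp : rexp (-(x - m₂) ^ 2 / (2 * v₂)) ≤ exp K * rexp (-(x - m₁) ^ 2 / (2 * v₁)) := by
    rw [← exp_add, exp_le_exp, neg_div, neg_div]
    have := sq_div_sub_sq_div_le_sq_div_sub hv₂' (NNReal.coe_lt_coe.mpr hv) x m₁ m₂
    have : (m₁ - m₂) ^ 2 / (2 * (v₁ - v₂)) ≤ K := by
      rw [div_le_iff₀ (by positivity)]; linarith
    linarith
  calc gaussianPDFReal m₂ v₂ x
      ≤ (c * (√(2 * π * v₁))⁻¹) * (exp K * rexp (-(x - m₁) ^ 2 / (2 * v₁))) :=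
        mul_le_mul hnorm hexp (by positivity) (by positivity)
    _ = c * exp K * gaussianPDFReal m₁ v₁ x := by rw [gaussianPDFReal]; ring

noncomputable def ouVariance (σ β t : ℝ) : ℝ := σ ^ 2 / (2 * β) * (1 - exp (-2 * β * t))

theorem ouVariance_pos {σ β t : ℝ} (hσ : σ ≠ 0) (hβ : 0 < β) (ht : 0 < t) :
    0 < ouVariance σ β t := by
  have : exp (-2 * β * t) < 1 := exp_lt_one_iff.mpr (by nlinarith)
  unfold ouVariance
  have : 0 < σ ^ 2 := by positivity
  have : 0 < 1 - exp (-2 * β * t) := by linarith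
  positivity

theorem mul_le_exp_mul_ouVariance (σ : ℝ) {β : ℝ} (hβ : 0 < β) (t : ℝ) :
    σ ^ 2 * t ≤ exp (2 * β * t) * ouVariance σ β t := by
  have h : exp (2 * β * t) * (1 - exp (-2 * β * t)) = exp (2 * β * t) - 1 := by
    rw [mul_sub, mul_one, ← exp_add, show 2 * β * t + -2 * β * t = 0 by ring, exp_zero]
  have := add_one_le_exp (2 * β * t)
  calc σ ^ 2 * t = σ ^ 2 / (2 * β) * (2 * β * t) := by field_simp
    _ ≤ σ ^ 2 / (2 * β) * (exp (2 * β * t) - 1) := by gcongr; linarith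
    _ = exp (2 * β * t) * ouVariance σ β t := by rw [ouVariance, ← h]; ring

theorem sq_one_sub_exp_le_sub_ouVariance (σ : ℝ) {β t : ℝ} (hβ : 0 < β) (ht : 0 ≤ t) :
    σ ^ 2 / (4 * β) * (1 - exp (-β * t)) ^ 2 ≤ σ ^ 2 * t - ouVariance σ β t := by
  have hsq := sq_one_sub_exp_neg_div_two_le (y := 2 * β * t) (by positivity)
  have hmono : (1 - exp (-β * t)) ^ 2 ≤ (1 - exp (-(2 * β * t))) ^ 2 := by
    have : exp (-(2 * β * t)) ≤ exp (-β * t) := exp_le_exp.mpr (by nlinarith)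
    have : exp (-β * t) ≤ 1 := exp_le_one_iff.mpr (by nlinarith)
    nlinarith
  calc σ ^ 2 / (4 * β) * (1 - exp (-β * t)) ^ 2
      = σ ^ 2 / (2 * β) * ((1 - exp (-β * t)) ^ 2 / 2) := by ring
    _ ≤ σ ^ 2 / (2 * β) * ((1 - exp (-(2 * β * t))) ^ 2 / 2) := by gcongr
    _ ≤ σ ^ 2 / (2 * β) * (2 * β * t - (1 - exp (-(2 * β * t)))) := by gcongr
    _ = σ ^ 2 * t - ouVariance σ β t := by
        rw [ouVariance, neg_mul, neg_mul]; field_simp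

theorem ouVariance_lt_mul {σ β t : ℝ} (hσ : σ ≠ 0) (hβ : 0 < β) (ht : 0 < t) :
    ouVariance σ β t < σ ^ 2 * t := by
  have : exp (-β * t) < 1 := exp_lt_one_iff.mpr (by nlinarith)
  have : 0 < 1 - exp (-β * t) := by linarith
  have : 0 < σ ^ 2 / (4 * β) * (1 - exp (-β * t)) ^ 2 := by positivity
  linarith [sq_one_sub_exp_le_sub_ouVariance σ hβ ht.le]

theorem gaussianPDFReal_toNNReal (μ v x : ℝ) (hv : 0 ≤ v) :
    gaussianPDFReal μ v.toNNReal x = 1 / √(2 * π * v) * exp (-(x - μ) ^ 2 / (2 * v)) := by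
  rw [gaussianPDFReal, coe_toNNReal _ hv, one_div]

open Real in
theorem ou_over_wiener_density_bounded_general
    (β σ T x₀ : ℝ) (hβ : 0 < β) (hσ : 0 < σ)
    (P₁ P₂ : ℝ → ℝ → ℝ)
    (hP₁ : ∀ x t, P₁ x t
      = (1 / Real.sqrt (2 * π * (σ ^ 2 * t)))
          * Real.exp (-(x - x₀) ^ 2 / (2 * (σ ^ 2 * t))))
    (hP₂ : ∀ x t, P₂ x t
      = (1 / Real.sqrt (2 * π * (σ ^ 2 / (2 * β) * (1 - Real.exp (-2 * β * t)))))
          * Real.exp (-(x - x₀ * Real.exp (-β * t)) ^ 2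
              / (2 * (σ ^ 2 / (2 * β) * (1 - Real.exp (-2 * β * t)))))) :
    ∃ C : ℝ, 0 < C ∧ ∀ x : ℝ, ∀ t ∈ Set.Ioc (0 : ℝ) T, P₂ x t ≤ C * P₁ x t := by
  refine ⟨exp (β * T) * exp (2 * β * x₀ ^ 2 / σ ^ 2), by positivity, ?_⟩
  rintro x t ⟨ht, htT⟩
  have hv₂ := ouVariance_pos hσ.ne' hβ ht
  rw [hP₁, hP₂, ← ouVariance, ← gaussianPDFReal_toNNReal _ _ _ hv₂.le,
    ← gaussianPDFReal_toNNReal _ (σ ^ 2 * t) _ (by positivity)]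
  apply gaussianPDFReal_le_mul_gaussianPDFReal
  · simpa using hv₂
  · rw [← NNReal.coe_lt_coe, coe_toNNReal _ hv₂.le, coe_toNNReal _ (by positivity)]
    exact ouVariance_lt_mul hσ.ne' hβ ht
  · positivity
  · rw [coe_toNNReal _ hv₂.le, coe_toNNReal _ (by positivity)]
    calc σ ^ 2 * t ≤ exp (2 * β * t) * ouVariance σ β t := mul_le_exp_mul_ouVariance σ hβ t
      _ ≤ exp (β * T) ^ 2 * ouVariance σ β t := by
          rw [← exp_nat_mul]
          gcongr ?_ * _
          exact exp_le_exp.mpr (by push_cast; nlinarith)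
  · rw [coe_toNNReal _ hv₂.le, coe_toNNReal _ (by positivity)]
    calc (x₀ - x₀ * exp (-β * t)) ^ 2
        = 2 * (2 * β * x₀ ^ 2 / σ ^ 2) * (σ ^ 2 / (4 * β) * (1 - exp (-β * t)) ^ 2) := by
          field_simp; ring
      _ ≤ 2 * (2 * β * x₀ ^ 2 / σ ^ 2) * (σ ^ 2 * t - ouVariance σ β t) := by
          gcongr
          exact sq_one_sub_exp_le_sub_ouVariance σ hβ ht.le

open Real in
/-- Boundedness of the quotient of the Ornstein–Uhlenbeck transition density
`P₂` over the Wiener transition density `P₁` on `ℝ × (0,T]` (assumption A1 of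
the paper's rejection-sampling method). -/
theorem ou_over_wiener_density_bounded
    (β σ T x₀ : ℝ) (hβ : 0 < β) (hσ : 0 < σ) (hT : 0 < T)
    (P₁ P₂ : ℝ → ℝ → ℝ)
    (hP₁ : ∀ x t, P₁ x t
      = (1 / Real.sqrt (2 * π * (σ ^ 2 * t)))
          * Real.exp (-(x - x₀) ^ 2 / (2 * (σ ^ 2 * t))))
    (hP₂ : ∀ x t, P₂ x t
      = (1 / Real.sqrt (2 * π * (σ ^ 2 / (2 * β) * (1 - Real.exp (-2 * β * t)))))
          * Real.exp (-(x - x₀ * Real.exp (-β * t)) ^ 2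
              / (2 * (σ ^ 2 / (2 * β) * (1 - Real.exp (-2 * β * t)))))) :
    ∃ C : ℝ, 0 < C ∧ ∀ x : ℝ, ∀ t ∈ Set.Ioc (0 : ℝ) T, P₂ x t ≤ C * P₁ x t :=
  ou_over_wiener_density_bounded_general β σ T x₀ hβ hσ P₁ P₂ hP₁ hP₂
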